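/- arXiv:1708.07691 — 5 statements merged into one kernel-verified Lean document; each statement's English description precedes it below -/
import Mathlib

section
/- Let h', h'' be independent exponential random variables with unit mean, and let θ ≥ 0. Define V₁ = max(h',h'') − θ·min(h',h''). Then for v > 0, the CDF of V₁ is F(v) = 1 − (2/(1+θ))e^{−v} + ((1−θ)/(1+θ))e^{−2v/(1−θ)} if 0 ≤ θ < 1, and F(v) = 1 − (2/(1+θ))e^{−v} if θ ≥ 1. -/
/-!
By independence the pair `(h', h'')` has law `ν ⊗ ν` with `ν = Exp(1)`. The event `V₁ ≤ v` is
symmetric in the two coordinates and ties are null, so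
`F(v) = 2 ℙ(h' < h'' ≤ v + θ h') = 2 ∫₀^∞ e^{-x} (e^{-x} - e^{-(v + θ x)})⁺ dx`.
For `θ ≥ 1` the positive part is the whole integrand; for `θ < 1` it is the integrand on
`[0, v / (1 - θ)]` and vanishes afterwards. Either way only integrals of `e^{-c x}` over half-lines
remain.
-/

open MeasureTheory ProbabilityTheory Real Set

theorem MeasureTheory.Measure.prod_diagonal_eq_zero {α : Type*} [MeasurableSpace α]
    [MeasurableEq α] (μ ν : Measure α) [SFinite ν] [NullSingletonClass ν] :
    μ.prod ν (diagonal α) = 0 := by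
  rw [Measure.prod_apply measurableSet_diagonal]
  have hslice (x : α) : Prod.mk x ⁻¹' diagonal α = {x} := by ext; simp [eq_comm]
  simp [hslice]

theorem MeasureTheory.Measure.prod_self_eq_two_mul_inter_lt {α : Type*} [MeasurableSpace α]
    [LinearOrder α] [TopologicalSpace α] [OrderClosedTopology α] [SecondCountableTopology α]
    [OpensMeasurableSpace α] (ν : Measure α) [SFinite ν] [NullSingletonClass ν]
    {s : Set (α × α)} (hs : MeasurableSet s) (hsymm : Prod.swap ⁻¹' s = s) :
    ν.prod ν s = 2 * ν.prod ν (s ∩ {p | p.1 < p.2}) := by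
  have hsplit : s \ diagonal α = (s ∩ {p | p.1 < p.2}) ∪ Prod.swap ⁻¹' (s ∩ {p | p.1 < p.2}) := by
    ext p
    have hswap : p.swap ∈ s ↔ p ∈ s := by rw [← mem_preimage, hsymm]
    simp only [mem_sdiff, mem_diagonal_iff, mem_union, mem_inter_iff, mem_preimage, mem_ofPred_eq,
      Prod.fst_swap, Prod.snd_swap, hswap, ← and_or_left, ne_iff_lt_or_gt]
  have hdisj : Disjoint (s ∩ {p | p.1 < p.2}) (Prod.swap ⁻¹' (s ∩ {p | p.1 < p.2})) :=
    disjoint_left.mpr fun p h h' => h.2.not_gt h'.2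
  have hmeas : MeasurableSet (s ∩ {p : α × α | p.1 < p.2}) := hs.inter measurableSet_lt'
  rw [← measure_sdiff_null (Measure.prod_diagonal_eq_zero ν ν), hsplit,
    measure_union hdisj (measurable_swap hmeas),
    Measure.measurePreserving_swap.measure_preimage hmeas.nullMeasurableSet, two_mul]

instance : IsProbabilityMeasure (expMeasure 1) := isProbabilityMeasure_expMeasure one_pos

instance (r : ℝ) : NullSingletonClass (expMeasure r) := by
  unfold expMeasure gammaMeasure; infer_instance

theorem expMeasure_Ioc {r : ℝ} (hr : 0 < r) {a : ℝ} (ha : 0 ≤ a) (b : ℝ) :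
    expMeasure r (Ioc a b) = ENNReal.ofReal (exp (-(r * a)) - exp (-(r * b))) := by
  have := isProbabilityMeasure_expMeasure hr
  rw [← measure_cdf (expMeasure r), StieltjesFunction.measure_Ioc, cdf_expMeasure_eq hr,
    cdf_expMeasure_eq hr, if_pos ha]
  split_ifs with hb
  · ring_nf
  · have : exp (-(r * a)) ≤ 1 := exp_le_one_iff.mpr (by nlinarith)
    have : 1 < exp (-(r * b)) := one_lt_exp_iff.mpr (by nlinarith)
    rw [ENNReal.ofReal_of_nonpos (by linarith), ENNReal.ofReal_of_nonpos (by linarith)]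

theorem lintegral_expMeasure {r : ℝ} {g : ℝ → ENNReal} (hg : Measurable g) :
    ∫⁻ x, g x ∂expMeasure r = ∫⁻ x in Ici 0, ENNReal.ofReal (r * exp (-(r * x))) * g x := by
  have hpdf : Measurable (gammaPDF 1 r) := (measurable_gammaPDFReal 1 r).ennreal_ofReal
  rw [expMeasure, gammaMeasure, lintegral_withDensity_eq_lintegral_mul _ hpdf hg,
    ← lintegral_indicator measurableSet_Ici]
  congr 1 with x
  by_cases hx : 0 ≤ x <;> simp [hx, gammaPDF, gammaPDFReal]

/-- The density at `h' = x` of the event `h' < h'' ≤ v + θ h'`, before taking the positive part. -/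
noncomputable def wedgeDensity (θ v x : ℝ) : ℝ := exp (-x) * (exp (-x) - exp (-(v + θ * x)))

theorem continuous_wedgeDensity (θ v : ℝ) : Continuous (wedgeDensity θ v) := by
  unfold wedgeDensity; fun_prop

theorem wedgeDensity_nonneg_iff {θ v x : ℝ} : 0 ≤ wedgeDensity θ v x ↔ x ≤ v + θ * x := by
  rw [wedgeDensity, mul_nonneg_iff_of_pos_left (exp_pos _), sub_nonneg, exp_le_exp, neg_le_neg_iff]

theorem wedgeDensity_eq (θ v x : ℝ) :
    wedgeDensity θ v x = exp (-2 * x) - exp (-v) * exp (-(1 + θ) * x) := by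
  rw [wedgeDensity, mul_sub, ← exp_add, ← exp_add, ← exp_add]; ring_nf

theorem expMeasure_prod_wedge (θ v : ℝ) :
    (expMeasure 1).prod (expMeasure 1) {p | p.1 < p.2 ∧ p.2 ≤ v + θ * p.1} =
      ∫⁻ x in Ici 0, ENNReal.ofReal (wedgeDensity θ v x) := by
  have hA : MeasurableSet {p : ℝ × ℝ | p.1 < p.2 ∧ p.2 ≤ v + θ * p.1} :=
    (measurableSet_lt measurable_fst measurable_snd).inter
      (measurableSet_le measurable_snd (by fun_prop))
  rw [Measure.prod_apply hA, lintegral_expMeasure (measurable_measure_prodMk_left hA)]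
  refine setLIntegral_congr_fun measurableSet_Ici fun x hx => ?_
  change _ * expMeasure 1 (Ioc x (v + θ * x)) = _
  rw [expMeasure_Ioc one_pos hx, ← ENNReal.ofReal_mul (by positivity), wedgeDensity]
  simp only [one_mul]

section

variable {θ : ℝ} (v : ℝ)

theorem integrableOn_Ioi_wedgeDensity (hθ : 0 ≤ θ) (c : ℝ) :
    IntegrableOn (wedgeDensity θ v) (Ioi c) := by
  simp only [funext (wedgeDensity_eq θ v)]
  exact (exp_neg_integrableOn_Ioi c two_pos).sub
    ((exp_neg_integrableOn_Ioi c (by linarith : 0 < 1 + θ)).const_mul _)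

theorem integral_Ioi_wedgeDensity (hθ : 0 ≤ θ) (c : ℝ) :
    ∫ x in Ioi c, wedgeDensity θ v x =
      exp (-2 * c) / 2 - exp (-v) * exp (-(1 + θ) * c) / (1 + θ) := by
  simp only [wedgeDensity_eq]
  rw [integral_sub (exp_neg_integrableOn_Ioi c two_pos)
    ((exp_neg_integrableOn_Ioi c (by linarith : 0 < 1 + θ)).const_mul _), integral_const_mul,
    integral_exp_mul_Ioi (by norm_num), integral_exp_mul_Ioi (by linarith)]
  field_simp

end

section

variable {θ v : ℝ}

theorem toReal_lintegral_wedgeDensity_of_one_le (hθ : 1 ≤ θ) (hv : 0 ≤ v) :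
    (∫⁻ x in Ici 0, ENNReal.ofReal (wedgeDensity θ v x)).toReal = 1 / 2 - exp (-v) / (1 + θ) := by
  have hnonneg : ∀ᵐ x ∂volume.restrict (Ici 0), 0 ≤ wedgeDensity θ v x :=
    (ae_restrict_iff' measurableSet_Ici).mpr <| ae_of_all _ fun x (hx : 0 ≤ x) =>
      wedgeDensity_nonneg_iff.mpr (by nlinarith)
  rw [← integral_eq_lintegral_of_nonneg_ae hnonneg
      (continuous_wedgeDensity θ v).aestronglyMeasurable,
    integral_Ici_eq_integral_Ioi, integral_Ioi_wedgeDensity v (by linarith) 0]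
  simp

theorem toReal_lintegral_wedgeDensity_of_lt_one (hθ₀ : 0 ≤ θ) (hθ : θ < 1) (hv : 0 ≤ v) :
    (∫⁻ x in Ici 0, ENNReal.ofReal (wedgeDensity θ v x)).toReal =
      1 / 2 - exp (-v) / (1 + θ) + (1 - θ) / (2 * (1 + θ)) * exp (-2 * v / (1 - θ)) := by
  set a := v / (1 - θ) with ha_def
  have hθ' : 0 < 1 - θ := by linarith
  have ha : 0 ≤ a := div_nonneg hv hθ'.le
  have hle_iff (x : ℝ) : x ≤ v + θ * x ↔ x ≤ a := by
    rw [ha_def, le_div_iff₀ hθ']; constructor <;> intro h <;> linarith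
  have htail : ∫⁻ x in Ioi a, ENNReal.ofReal (wedgeDensity θ v x) = 0 :=
    setLIntegral_eq_zero measurableSet_Ioi fun x (hx : a < x) =>
      ENNReal.ofReal_of_nonpos (not_le.mp (wedgeDensity_nonneg_iff.not.mpr
        ((hle_iff x).not.mpr hx.not_ge))).le
  have hnonneg : ∀ᵐ x ∂volume.restrict (Icc 0 a), 0 ≤ wedgeDensity θ v x :=
    (ae_restrict_iff' measurableSet_Icc).mpr <| ae_of_all _ fun x hx =>
      wedgeDensity_nonneg_iff.mpr ((hle_iff x).mpr hx.2)
  have hexp : exp (-v) * exp (-(1 + θ) * a) = exp (-2 * v / (1 - θ)) := by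
    rw [← exp_add, ha_def]; congr 1; field_simp; ring
  rw [← Icc_union_Ioi_eq_Ici ha, lintegral_union measurableSet_Ioi
      (Iic_disjoint_Ioi le_rfl |>.mono_left Icc_subset_Iic_self), htail, add_zero,
    ← integral_eq_lintegral_of_nonneg_ae hnonneg
      (continuous_wedgeDensity θ v).aestronglyMeasurable,
    integral_Icc_eq_integral_Ioc, ← intervalIntegral.integral_of_le ha,
    ← intervalIntegral.integral_Ioi_sub_Ioi (integrableOn_Ioi_wedgeDensity v hθ₀ 0) ha,
    integral_Ioi_wedgeDensity v hθ₀, integral_Ioi_wedgeDensity v hθ₀, hexp,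
    show -2 * a = -2 * v / (1 - θ) by rw [ha_def]; ring]
  simp only [mul_zero, exp_zero]
  field_simp
  ring

end

/-- CDF of `V₁ = max(h',h'') − θ·min(h',h'')` for i.i.d. unit-mean exponential `h', h''`. -/
theorem cdf_V1 {Ω : Type*} [MeasureSpace Ω] [IsProbabilityMeasure (ℙ : Measure Ω)]
    (h' h'' : Ω → ℝ) (hm' : Measurable h') (hm'' : Measurable h'')
    (hind : IndepFun h' h'' ℙ)
    (hd' : Measure.map h' ℙ = expMeasure 1)
    (hd'' : Measure.map h'' ℙ = expMeasure 1)
    (θ : ℝ) (hθ : 0 ≤ θ) (v : ℝ) (hv : 0 < v) :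
    (ℙ {ω | max (h' ω) (h'' ω) - θ * min (h' ω) (h'' ω) ≤ v}).toReal =
      if θ < 1 then
        1 - (2 / (1 + θ)) * Real.exp (-v) + ((1 - θ) / (1 + θ)) * Real.exp (-2 * v / (1 - θ))
      else
        1 - (2 / (1 + θ)) * Real.exp (-v) := by
  set S := {p : ℝ × ℝ | max p.1 p.2 - θ * min p.1 p.2 ≤ v}
  have hS : MeasurableSet S := measurableSet_le (by fun_prop) measurable_const
  have hjoint : Measure.map (fun ω => (h' ω, h'' ω)) ℙ = (expMeasure 1).prod (expMeasure 1) := by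
    rw [hind.map_prod_eq_prod_map_map hm'.aemeasurable hm''.aemeasurable, hd', hd'']
  have hsymm : Prod.swap ⁻¹' S = S := by
    ext p
    simp only [S, mem_preimage, mem_ofPred_eq, Prod.fst_swap, Prod.snd_swap, max_comm p.2,
      min_comm p.2]
  have hwedge : S ∩ {p | p.1 < p.2} = {p | p.1 < p.2 ∧ p.2 ≤ v + θ * p.1} := by
    ext p
    simp only [S, mem_inter_iff, mem_ofPred_eq, and_comm (a := _ ≤ v)]
    refine and_congr_right fun hlt => ?_
    rw [max_eq_right hlt.le, min_eq_left hlt.le, sub_le_iff_le_add]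
  change (ℙ ((fun ω => (h' ω, h'' ω)) ⁻¹' S)).toReal = _
  rw [← Measure.map_apply (hm'.prodMk hm'') hS, hjoint,
    Measure.prod_self_eq_two_mul_inter_lt _ hS hsymm, hwedge, expMeasure_prod_wedge,
    ENNReal.toReal_mul, ENNReal.toReal_ofNat]
  split_ifs with hθ1
  · rw [toReal_lintegral_wedgeDensity_of_lt_one hθ hθ1 hv.le]
    field_simp
  · rw [toReal_lintegral_wedgeDensity_of_one_le (not_lt.mp hθ1) hv.le]
    field_simp
end

section
/- Let h', h'' be i.i.d. Exp(1) random variables and I ≥ 0 a nonnegative random variable independent of (h',h''). For θ ≥ 1, the probability P(max(h',h'')/(I + min(h',h'')) > θ) equals (2/(1+θ))·E[exp(−θI)]. -/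
/-!
Conditioning on `I = t ≥ 0`, the event is the union of `{h' > θ (t + h'')}` and
`{h'' > θ (t + h')}`; for `θ ≥ 1` these are disjoint on the nonnegative quadrant, and they have
the same probability by symmetry. Since `P(h' > a) = exp (-a)` for `a ≥ 0`, each equals
`E[exp (-θ (t + h''))] = exp (-θ t) / (1 + θ)`. Integrating `2 exp (-θ t) / (1 + θ)` against the law
of `I`, which is legitimate by independence, gives the formula.
-/

open MeasureTheory ProbabilityTheory Real Set

namespace ProbabilityTheory

lemma IndepFun.measure_preimage_eq_lintegral {Ω α β : Type*} [MeasurableSpace Ω]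
    [MeasurableSpace α] [MeasurableSpace β] {μ : Measure Ω} [IsFiniteMeasure μ] {X : Ω → α}
    {Y : Ω → β} (hXY : IndepFun X Y μ) (hX : AEMeasurable X μ) (hY : AEMeasurable Y μ)
    {s : Set (α × β)} (hs : MeasurableSet s) :
    μ ((fun ω ↦ (X ω, Y ω)) ⁻¹' s) = ∫⁻ ω, μ.map X {x | (x, Y ω) ∈ s} ∂μ := by
  rw [← Measure.map_apply_of_aemeasurable (hX.prodMk hY) hs,
    hXY.map_prod_eq_prod_map_map hX hY, Measure.prod_apply_symm hs,
    lintegral_map' (measurable_measure_prodMk_right hs).aemeasurable hY]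
  rfl

lemma expMeasure_Iio_zero (r : ℝ) : expMeasure r (Iio 0) = 0 := by
  rw [expMeasure, gammaMeasure, withDensity_apply _ measurableSet_Iio]
  exact lintegral_exponentialPDF_of_nonpos le_rfl

lemma ae_nonneg_expMeasure (r : ℝ) : ∀ᵐ x ∂expMeasure r, 0 ≤ x :=
  ae_iff.mpr (measure_mono_null (fun _ ↦ not_le.mp) (expMeasure_Iio_zero r))

variable {r : ℝ}

lemma expMeasure_Ioi (hr : 0 < r) {a : ℝ} (ha : 0 ≤ a) :
    expMeasure r (Ioi a) = ENNReal.ofReal (exp (-(r * a))) := by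
  have := isProbabilityMeasure_expMeasure hr
  rw [← compl_Iic, prob_compl_eq_one_sub measurableSet_Iic, ← ofReal_cdf,
    cdf_expMeasure_eq hr, if_pos ha, ← ENNReal.ofReal_one,
    ← ENNReal.ofReal_sub _ (sub_nonneg.mpr (exp_le_one_iff.mpr (neg_nonpos.mpr (by positivity)))),
    sub_sub_cancel]

lemma lintegral_exp_neg_mul_expMeasure (hr : 0 < r) {s : ℝ} (hs : 0 ≤ s) :
    ∫⁻ y, ENNReal.ofReal (exp (-(s * y))) ∂expMeasure r = ENNReal.ofReal (r / (r + s)) := by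
  have hrs : -(r + s) < 0 := by linarith
  have hdensity : (exponentialPDF r * fun y ↦ ENNReal.ofReal (exp (-(s * y)))) =
      (Ici 0).indicator (fun y ↦ ENNReal.ofReal (r * exp (-(r + s) * y))) := by
    funext y
    rw [Pi.mul_apply]
    rcases lt_or_ge y 0 with hy | hy
    · simp [exponentialPDF_of_neg hy, hy]
    · rw [exponentialPDF_of_nonneg hy, indicator_of_mem (mem_Ici.mpr hy),
        ← ENNReal.ofReal_mul (by positivity), mul_assoc, ← exp_add]
      ring_nf
  have hint : IntegrableOn (fun y ↦ r * exp (-(r + s) * y)) (Ici 0) :=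
    (integrableOn_Ici_iff_integrableOn_Ioi).mpr ((integrableOn_exp_mul_Ioi hrs 0).const_mul r)
  rw [show expMeasure r = volume.withDensity (exponentialPDF r) from rfl,
    lintegral_withDensity_eq_lintegral_mul _
      (show Measurable (exponentialPDF r) by unfold exponentialPDF; fun_prop) (by fun_prop),
    hdensity, lintegral_indicator measurableSet_Ici,
    ← ofReal_integral_eq_lintegral_ofReal hint (ae_of_all _ fun _ ↦ by positivity),
    integral_Ici_eq_integral_Ioi, integral_const_mul, integral_exp_mul_Ioi hrs]
  congr 1
  field_simp
  simp

lemma expMeasure_prod_add_mul_lt (hr : 0 < r) {q : ℝ} (hq : 0 < q) {a b : ℝ} (ha : 0 ≤ a)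
    (hb : 0 ≤ b) :
    (expMeasure r).prod (expMeasure q) {p | a + b * p.2 < p.1} =
      ENNReal.ofReal (exp (-(r * a)) * (q / (q + r * b))) := by
  have := isProbabilityMeasure_expMeasure hr
  have := isProbabilityMeasure_expMeasure hq
  have hslice : ∀ᵐ y ∂expMeasure q, expMeasure r (Ioi (a + b * y)) =
      ENNReal.ofReal (exp (-(r * a))) * ENNReal.ofReal (exp (-(r * b * y))) := by
    filter_upwards [ae_nonneg_expMeasure q] with y hy
    rw [expMeasure_Ioi hr (by positivity), ← ENNReal.ofReal_mul (by positivity),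
      ← exp_add]
    ring_nf
  rw [Measure.prod_apply_symm (measurableSet_lt (by fun_prop) (by fun_prop))]
  refine (lintegral_congr_ae hslice).trans ?_
  rw [lintegral_const_mul' _ _ ENNReal.ofReal_ne_top,
    lintegral_exp_neg_mul_expMeasure hq (by positivity), ← ENNReal.ofReal_mul (by positivity)]

lemma expMeasure_prod_mul_add_min_lt_max (hr : 0 < r) {θ t : ℝ} (hθ : 1 ≤ θ) (ht : 0 ≤ t) :
    (expMeasure r).prod (expMeasure r) {p | θ * (t + min p.1 p.2) < max p.1 p.2} =
      ENNReal.ofReal (2 / (1 + θ) * exp (-(r * (θ * t)))) := by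
  have := isProbabilityMeasure_expMeasure hr
  set A : Set (ℝ × ℝ) := {p | θ * t + θ * p.2 < p.1}
  have hA : MeasurableSet A := measurableSet_lt (by fun_prop) (by fun_prop)
  have hunion : {p : ℝ × ℝ | θ * (t + min p.1 p.2) < max p.1 p.2} = A ∪ Prod.swap ⁻¹' A := by
    ext ⟨x, y⟩
    simp only [A, mem_union, mem_preimage, mem_ofPred_eq, Prod.swap_prod_mk]
    rcases le_total x y with hxy | hyx
    · have := mul_le_mul_of_nonneg_left hxy (by linarith : (0 : ℝ) ≤ θ)
      rw [min_eq_left hxy, max_eq_right hxy]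
      constructor <;> intro h
      · exact Or.inr (by linarith)
      · rcases h with h | h <;> linarith
    · have := mul_le_mul_of_nonneg_left hyx (by linarith : (0 : ℝ) ≤ θ)
      rw [min_eq_right hyx, max_eq_left hyx]
      constructor <;> intro h
      · exact Or.inl (by linarith)
      · rcases h with h | h <;> linarith
  have hdisj : AEDisjoint ((expMeasure r).prod (expMeasure r)) A (Prod.swap ⁻¹' A) := by
    have hnull : (expMeasure r).prod (expMeasure r) (Iio 0 ×ˢ univ ∪ univ ×ˢ Iio 0) = 0 :=
      measure_union_null (by rw [Measure.prod_prod, expMeasure_Iio_zero, zero_mul])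
        (by rw [Measure.prod_prod, expMeasure_Iio_zero, mul_zero])
    refine measure_mono_null ?_ hnull
    rintro ⟨x, y⟩ ⟨hx, hy⟩
    simp only [A, mem_preimage, mem_ofPred_eq, Prod.swap_prod_mk] at hx hy
    simp only [mem_union, mem_prod, mem_Iio, mem_univ, and_true, true_and]
    by_contra! hxy
    nlinarith [mul_nonneg (sub_nonneg.mpr hθ) (add_nonneg hxy.1 hxy.2)]
  rw [hunion, measure_union₀ (hA.preimage measurable_swap).nullMeasurableSet hdisj,
    Measure.measurePreserving_swap.measure_preimage hA.nullMeasurableSet,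
    expMeasure_prod_add_mul_lt hr hr (by positivity) (by positivity),
    ← ENNReal.ofReal_add (by positivity) (by positivity)]
  congr 1
  field_simp
  ring

end ProbabilityTheory

/-- Success probability of the first decoded MTD under RRS for `θ ≥ 1`:
`P(max(h',h'')/(I + min(h',h'')) > θ) = (2/(1+θ)) E[exp(−θ I)]`. -/
theorem rrs_success_first_large_theta {Ω : Type*} [MeasureSpace Ω]
    [IsProbabilityMeasure (ℙ : Measure Ω)]
    (h' h'' I : Ω → ℝ) (hm' : Measurable h') (hm'' : Measurable h'')
    (hmI : Measurable I)
    (hind12 : IndepFun h' h'' ℙ)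
    (hindI : IndepFun (fun ω => (h' ω, h'' ω)) I ℙ)
    (hd' : Measure.map h' ℙ = expMeasure 1)
    (hd'' : Measure.map h'' ℙ = expMeasure 1)
    (hIpos : ∀ᵐ ω ∂ℙ, 0 ≤ I ω)
    (θ : ℝ) (hθ : 1 ≤ θ) :
    (ℙ {ω | max (h' ω) (h'' ω) > θ * (I ω + min (h' ω) (h'' ω))}).toReal =
      (2 / (1 + θ)) * ∫ ω, Real.exp (-θ * I ω) ∂ℙ := by
  have hpair :
      (ℙ : Measure Ω).map (fun ω ↦ (h' ω, h'' ω)) = (expMeasure 1).prod (expMeasure 1) := by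
    rw [hind12.map_prod_eq_prod_map_map hm'.aemeasurable hm''.aemeasurable, hd', hd'']
  let S : Set ((ℝ × ℝ) × ℝ) := {p | θ * (p.2 + min p.1.1 p.1.2) < max p.1.1 p.1.2}
  have hslice : ∀ᵐ ω ∂ℙ, (ℙ : Measure Ω).map (fun ω ↦ (h' ω, h'' ω)) {x | (x, I ω) ∈ S} =
      ENNReal.ofReal (2 / (1 + θ) * exp (-θ * I ω)) := by
    filter_upwards [hIpos] with ω hω
    have := expMeasure_prod_mul_add_min_lt_max one_pos hθ hω
    rw [one_mul, ← neg_mul] at this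
    rwa [hpair]
  have hint : Integrable (fun ω ↦ 2 / (1 + θ) * exp (-θ * I ω)) ℙ := by
    refine (Integrable.of_bound (by fun_prop) 1 ?_).const_mul _
    filter_upwards [hIpos] with ω hω
    rw [norm_of_nonneg (exp_nonneg _), exp_le_one_iff]
    nlinarith
  calc (ℙ {ω | max (h' ω) (h'' ω) > θ * (I ω + min (h' ω) (h'' ω))}).toReal
      = (∫⁻ ω, ENNReal.ofReal (2 / (1 + θ) * exp (-θ * I ω)) ∂ℙ).toReal := by
        rw [← lintegral_congr_ae hslice, ← hindI.measure_preimage_eq_lintegral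
          (hm'.prodMk hm'').aemeasurable hmI.aemeasurable
          (measurableSet_lt (by fun_prop) (by fun_prop))]
        rfl
    _ = (2 / (1 + θ)) * ∫ ω, Real.exp (-θ * I ω) ∂ℙ := by
        rw [← ofReal_integral_eq_lintegral_ofReal hint (ae_of_all _ fun _ ↦ by positivity),
          ENNReal.toReal_ofReal (integral_nonneg fun _ ↦ by positivity), integral_const_mul]
end

section
/- Let h', h'' be i.i.d. Exp(1) random variables and I ≥ 0 a nonnegative random variable independent of (h',h''). For 0 ≤ θ < 1, P(max(h',h'')/(I + min(h',h'')) > θ) = (2/(1+θ))·E[exp(−θI)] − ((1−θ)/(1+θ))·E[exp(−(2θ/(1−θ))I)]. -/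
open MeasureTheory ProbabilityTheory Real

open Set

/-!
Given `I = x ≥ 0`, the event is symmetric in `(h', h'')`, so up to the null diagonal its
probability is twice that of `{h' < h'', θ (x + h') < h''}`, which is
`2 E[exp (-max h' (θ (x + h')))]`. The two arguments of the max cross at
`h' = θ x / (1 - θ)`; splitting the integral there gives
`2 / (1 + θ) e^{-θ x} - (1 - θ) / (1 + θ) e^{-2 θ x / (1 - θ)}`, and independence lets us
average this over the law of `I`.
-/

instance inst_s3 : IsProbabilityMeasure (expMeasure 1) := isProbabilityMeasure_expMeasure one_pos

instance inst_s3_2 (r : ℝ) : NullSingletonClass (expMeasure r) :=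
  inferInstanceAs (NullSingletonClass (volume.withDensity _))

lemma expMeasure_real_Ioi {r u : ℝ} (hr : 0 < r) (hu : 0 ≤ u) :
    (expMeasure r).real (Ioi u) = exp (-(r * u)) := by
  have := isProbabilityMeasure_expMeasure hr
  rw [← compl_Iic, probReal_compl_eq_one_sub measurableSet_Iic, ← cdf_eq_real,
    cdf_expMeasure_eq hr, if_pos hu, sub_sub_cancel]

lemma integral_expMeasure {r : ℝ} (hr : 0 < r) (f : ℝ → ℝ) :
    ∫ a, f a ∂expMeasure r = ∫ a in Ioi 0, r * exp (-(r * a)) * f a := by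
  have hpdf : Measurable (exponentialPDF r) := (measurable_exponentialPDFReal r).ennreal_ofReal
  rw [show expMeasure r = volume.withDensity (exponentialPDF r) from rfl,
    integral_withDensity_eq_integral_toReal_smul hpdf (ae_of_all _ fun _ => ENNReal.ofReal_lt_top),
    ← integral_Ici_eq_integral_Ioi, ← integral_indicator measurableSet_Ici]
  congr 1 with a
  by_cases ha : 0 ≤ a
  · simp [exponentialPDF_of_nonneg ha, ha, (mul_pos hr (exp_pos _)).le]
  · simp [exponentialPDF_of_neg (not_le.1 ha), ha]

lemma MeasureTheory.Measure.prod_diagonal_eq_zero_s3 {μ ν : Measure ℝ} [SFinite ν]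
    [NullSingletonClass ν] : μ.prod ν {p | p.1 = p.2} = 0 := by
  rw [Measure.measure_prod_null (measurableSet_eq_fun measurable_fst measurable_snd)]
  refine Filter.Eventually.of_forall fun a => ?_
  simp [preimage]

lemma MeasureTheory.Measure.prod_self_eq_two_mul_of_swap_invariant {μ : Measure ℝ} [SFinite μ]
    [NullSingletonClass μ] {s : Set (ℝ × ℝ)} (hs : MeasurableSet s) (hswap : Prod.swap ⁻¹' s = s) :
    μ.prod μ s = 2 * μ.prod μ (s ∩ {p | p.1 < p.2}) := by
  set t := s ∩ {p | p.1 < p.2}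
  have ht : MeasurableSet t := hs.inter (measurableSet_lt measurable_fst measurable_snd)
  have hdisj : Disjoint t (Prod.swap ⁻¹' t) :=
    disjoint_left.2 fun p h1 h2 => lt_asymm h1.2 (show p.2 < p.1 from h2.2)
  have hcover : s ⊆ (t ∪ Prod.swap ⁻¹' t) ∪ {p | p.1 = p.2} := by
    intro p hp
    rcases lt_trichotomy p.1 p.2 with h | h | h
    · exact Or.inl (Or.inl ⟨hp, h⟩)
    · exact Or.inr h
    · exact Or.inl (Or.inr ⟨by rw [← hswap] at hp; exact hp, h⟩)
  have hsub : t ∪ Prod.swap ⁻¹' t ⊆ s := by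
    rintro p (hp | hp)
    · exact hp.1
    · rw [← hswap]; exact hp.1
  calc μ.prod μ s = μ.prod μ (t ∪ Prod.swap ⁻¹' t) := by
        refine le_antisymm ?_ (measure_mono hsub)
        calc μ.prod μ s ≤ μ.prod μ (t ∪ Prod.swap ⁻¹' t) + μ.prod μ {p | p.1 = p.2} :=
              (measure_mono hcover).trans (measure_union_le _ _)
          _ = _ := by rw [Measure.prod_diagonal_eq_zero_s3, add_zero]
    _ = μ.prod μ t + μ.prod μ (Prod.swap ⁻¹' t) := measure_union hdisj (measurable_swap ht)
    _ = 2 * μ.prod μ t := by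
        rw [← Measure.map_apply measurable_swap ht, Measure.prod_swap, two_mul]

lemma MeasureTheory.Measure.measureReal_prod_apply {α β : Type*} [MeasurableSpace α]
    [MeasurableSpace β] {μ : Measure α} {ν : Measure β} [SFinite μ] [IsFiniteMeasure ν]
    {s : Set (α × β)} (hs : MeasurableSet s) :
    (μ.prod ν).real s = ∫ a, ν.real (Prod.mk a ⁻¹' s) ∂μ := by
  rw [measureReal_def, Measure.prod_apply hs, ← integral_toReal
    (measurable_measure_prodMk_left hs).aemeasurable (ae_of_all _ fun _ => measure_lt_top _ _)]
  rfl

lemma integral_Ioi_exp_neg_mul_exp_neg_max {θ x : ℝ} (hθ0 : 0 ≤ θ) (hθ1 : θ < 1) (hx : 0 ≤ x) :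
    ∫ a in Ioi 0, exp (-a) * exp (-max a (θ * (x + a))) =
      (2 * exp (-θ * x) - (1 - θ) * exp (-(2 * θ / (1 - θ)) * x)) / (2 * (1 + θ)) := by
  have h1θ : 0 < 1 - θ := by linarith
  set c := θ * x / (1 - θ)
  have hc : 0 ≤ c := by positivity
  have hcx : c * (1 - θ) = θ * x := div_mul_cancel₀ _ h1θ.ne'
  set F := fun a => exp (-a) * exp (-max a (θ * (x + a)))
  set g₁ := fun a => exp (-θ * x) * exp (-(1 + θ) * a)
  set g₂ := fun a : ℝ => exp (-2 * a)
  have hF₁ : EqOn F g₁ (uIcc 0 c) := by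
    intro a ha
    rw [uIcc_of_le hc] at ha
    have : a ≤ θ * (x + a) := by nlinarith [ha.2]
    simp only [F, g₁, max_eq_right this, ← exp_add]
    ring_nf
  have hF₂ : EqOn F g₂ (Ioi c) := by
    intro a ha
    have : θ * (x + a) ≤ a := by nlinarith [ha.out]
    simp only [F, g₂, max_eq_left this, ← exp_add]
    ring_nf
  have hg₁ : IntegrableOn g₁ (Ioi 0) := (exp_neg_integrableOn_Ioi 0 (by linarith)).const_mul _
  have hg₂ : IntegrableOn g₂ (Ioi c) := exp_neg_integrableOn_Ioi c two_pos
  have hF : Continuous F := by fun_prop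
  rw [← intervalIntegral.integral_interval_add_Ioi' (hF.intervalIntegrable 0 c)
      (hg₂.congr_fun hF₂.symm measurableSet_Ioi),
    intervalIntegral.integral_congr hF₁, setIntegral_congr_fun measurableSet_Ioi hF₂,
    ← intervalIntegral.integral_Ioi_sub_Ioi hg₁ hc]
  simp only [g₁, g₂, integral_const_mul, integral_exp_mul_Ioi (by linarith : -(1 + θ) < 0),
    integral_exp_mul_Ioi (by norm_num : (-2 : ℝ) < 0)]
  have hexp : exp (-(1 + θ) * c) = exp (-2 * c) / exp (-θ * x) := by
    rw [eq_div_iff (exp_pos _).ne', ← exp_add]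
    congr 1
    linear_combination hcx
  have h2c : -2 * c = -(2 * θ / (1 - θ)) * x := by
    simp only [c]; ring
  rw [mul_zero, exp_zero, hexp, h2c]
  field_simp
  ring

lemma expMeasure_prod_real_setOf_max_gt {θ x : ℝ} (hθ0 : 0 ≤ θ) (hθ1 : θ < 1) (hx : 0 ≤ x) :
    ((expMeasure 1).prod (expMeasure 1)).real {p : ℝ × ℝ | max p.1 p.2 > θ * (x + min p.1 p.2)} =
      2 / (1 + θ) * exp (-θ * x) - (1 - θ) / (1 + θ) * exp (-(2 * θ / (1 - θ)) * x) := by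
  set s := {p : ℝ × ℝ | max p.1 p.2 > θ * (x + min p.1 p.2)}
  have hs : MeasurableSet s := measurableSet_lt (by fun_prop) (by fun_prop)
  have hswap : Prod.swap ⁻¹' s = s := by
    ext ⟨a, b⟩
    simp only [s, mem_preimage, Prod.swap_prod_mk, mem_ofPred_eq, max_comm b a, min_comm b a]
  have hslice (a : ℝ) : Prod.mk a ⁻¹' (s ∩ {p | p.1 < p.2}) = Ioi (max a (θ * (x + a))) := by
    ext b
    simp only [s, mem_preimage, mem_inter_iff, mem_ofPred_eq, mem_Ioi, max_lt_iff]
    constructor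
    · rintro ⟨h, hab⟩
      rw [max_eq_right hab.le, min_eq_left hab.le] at h
      exact ⟨hab, h⟩
    · rintro ⟨hab, h⟩
      rw [max_eq_right hab.le, min_eq_left hab.le]
      exact ⟨h, hab⟩
  have hlower : ((expMeasure 1).prod (expMeasure 1)).real (s ∩ {p | p.1 < p.2}) =
      ∫ a in Ioi 0, exp (-a) * exp (-max a (θ * (x + a))) := by
    rw [Measure.measureReal_prod_apply (hs.inter (measurableSet_lt measurable_fst measurable_snd)),
      integral_expMeasure one_pos]
    refine setIntegral_congr_fun measurableSet_Ioi fun a ha => ?_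
    rw [hslice, expMeasure_real_Ioi one_pos ((le_of_lt ha).trans (le_max_left _ _))]
    simp only [one_mul]
  rw [measureReal_def, Measure.prod_self_eq_two_mul_of_swap_invariant hs hswap,
    ENNReal.toReal_mul, ENNReal.toReal_ofNat, ← measureReal_def, hlower,
    integral_Ioi_exp_neg_mul_exp_neg_max hθ0 hθ1 hx]
  field_simp

lemma ProbabilityTheory.IndepFun.measureReal_preimage_eq_integral {Ω α β : Type*}
    [MeasurableSpace Ω] [MeasurableSpace α] [MeasurableSpace β] {P : Measure Ω} [IsFiniteMeasure P]
    {X : Ω → α} {Y : Ω → β} (hXY : IndepFun X Y P) (hX : Measurable X) (hY : Measurable Y)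
    {s : Set (α × β)} (hs : MeasurableSet s) :
    P.real ((fun ω => (X ω, Y ω)) ⁻¹' s) = ∫ ω, (P.map Y).real (Prod.mk (X ω) ⁻¹' s) ∂P := by
  rw [← map_measureReal_apply (hX.prodMk hY) hs,
    (indepFun_iff_map_prod_eq_prod_map_map hX.aemeasurable hY.aemeasurable).1 hXY,
    Measure.measureReal_prod_apply hs]
  exact integral_map hX.aemeasurable
    (measurable_measure_prodMk_left hs).ennreal_toReal.aestronglyMeasurable

lemma integrable_exp_neg_mul_of_ae_nonneg {Ω : Type*} [MeasurableSpace Ω] {P : Measure Ω}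
    [IsFiniteMeasure P] {X : Ω → ℝ} (hX : AEMeasurable X P) (hX0 : ∀ᵐ ω ∂P, 0 ≤ X ω) {b : ℝ}
    (hb : 0 ≤ b) : Integrable (fun ω => exp (-b * X ω)) P :=
  .of_bound (by fun_prop) 1 <| hX0.mono fun ω h => by
    rw [norm_of_nonneg (exp_pos _).le, exp_le_one_iff]
    nlinarith

/-- Success probability of the first decoded MTD under RRS for `0 ≤ θ < 1`. -/
theorem rrs_success_first_small_theta {Ω : Type*} [MeasureSpace Ω]
    [IsProbabilityMeasure (ℙ : Measure Ω)]
    (h' h'' I : Ω → ℝ) (hm' : Measurable h') (hm'' : Measurable h'')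
    (hmI : Measurable I)
    (hind12 : IndepFun h' h'' ℙ)
    (hindI : IndepFun (fun ω => (h' ω, h'' ω)) I ℙ)
    (hd' : Measure.map h' ℙ = expMeasure 1)
    (hd'' : Measure.map h'' ℙ = expMeasure 1)
    (hIpos : ∀ᵐ ω ∂ℙ, 0 ≤ I ω)
    (θ : ℝ) (hθ0 : 0 ≤ θ) (hθ1 : θ < 1) :
    (ℙ {ω | max (h' ω) (h'' ω) > θ * (I ω + min (h' ω) (h'' ω))}).toReal =
      (2 / (1 + θ)) * (∫ ω, Real.exp (-θ * I ω) ∂ℙ) -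
        ((1 - θ) / (1 + θ)) * ∫ ω, Real.exp (-(2 * θ / (1 - θ)) * I ω) ∂ℙ := by
  have hlaw : Measure.map (fun ω => (h' ω, h'' ω)) ℙ = (expMeasure 1).prod (expMeasure 1) := by
    rw [(indepFun_iff_map_prod_eq_prod_map_map hm'.aemeasurable hm''.aemeasurable).1 hind12,
      hd', hd'']
  have hs : MeasurableSet {q : ℝ × ℝ × ℝ | max q.2.1 q.2.2 > θ * (q.1 + min q.2.1 q.2.2)} :=
    measurableSet_lt (by fun_prop) (by fun_prop)
  have hevent : (ℙ {ω | max (h' ω) (h'' ω) > θ * (I ω + min (h' ω) (h'' ω))}).toReal =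
      ∫ ω, ((expMeasure 1).prod (expMeasure 1)).real
        {p : ℝ × ℝ | max p.1 p.2 > θ * (I ω + min p.1 p.2)} ∂ℙ := by
    rw [← hlaw]
    exact hindI.symm.measureReal_preimage_eq_integral hmI (hm'.prodMk hm'') hs
  have hint {b : ℝ} (hb : 0 ≤ b) := integrable_exp_neg_mul_of_ae_nonneg hmI.aemeasurable hIpos hb
  have hb : 0 ≤ 2 * θ / (1 - θ) := div_nonneg (by linarith) (by linarith)
  rw [hevent,
    integral_congr_ae (hIpos.mono fun ω hω => expMeasure_prod_real_setOf_max_gt hθ0 hθ1 hω),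
    integral_sub ((hint hθ0).const_mul _) ((hint hb).const_mul _), integral_const_mul,
    integral_const_mul]
end

section
/- Let α > 2 and let δ* > 0 satisfy ξ^{δ*^{2/α} − 1} + ξ^{2^{(α−2)/α}·δ*^{2/α} − 1} = 2 for some ξ ∈ (0,1). Then 2^{(2−α)/2} ≤ δ* ≤ 1. -/
open Real

/-! Put `t = δ ^ (2 / α)` and `c = 2 ^ ((α - 2) / α) ≥ 1`, so that `t ≤ c * t`. Since `u ↦ ξ ^ u`
is strictly decreasing and takes the value `1` at `0`, the two terms `ξ ^ (t - 1)` and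
`ξ ^ (c * t - 1)` can only average to `1` if `t - 1 ≤ 0 ≤ c * t - 1`. The first inequality gives
`δ ≤ 1`; the second says `(2 ^ ((α - 2) / 2) * δ) ^ (2 / α) ≥ 1`, i.e. `δ ≥ 2 ^ ((2 - α) / 2)`. -/

theorem StrictAnti.le_and_le_of_add_eq_two_mul {β : Type*} [LinearOrder β] {f : β → ℝ}
    (hf : StrictAnti f) {x y a : β} (h : f x + f y = 2 * f a) (hxy : x ≤ y) :
    x ≤ a ∧ a ≤ y := by
  constructor
  · by_contra! hax
    linarith [hf hax, hf (hax.trans_le hxy)]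
  · by_contra! hya
    linarith [hf hya, hf (hxy.trans_lt hya)]

theorem Real.inv_le_of_one_le_rpow_mul_rpow {b x p : ℝ} (hb : 0 < b) (hx : 0 ≤ x) (hp : 0 < p)
    (h : 1 ≤ b ^ p * x ^ p) : b⁻¹ ≤ x := by
  rw [← mul_rpow hb.le hx, ← one_rpow p, rpow_le_rpow_iff zero_le_one (by positivity) hp] at h
  exact (inv_le_iff_one_le_mul₀' hb).2 h

/-- Bounds on the fair-coexistence power budget `δ*`. -/
theorem delta_star_bounds (α ξ δ : ℝ) (hα : 2 < α) (hξ0 : 0 < ξ) (hξ1 : ξ < 1)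
    (hδ : 0 < δ)
    (heq : ξ ^ (δ ^ (2 / α) - 1) + ξ ^ (2 ^ ((α - 2) / α) * δ ^ (2 / α) - 1) = 2) :
    2 ^ ((2 - α) / 2) ≤ δ ∧ δ ≤ 1 := by
  have hp : 0 < 2 / α := by positivity
  have hc : 1 ≤ (2 : ℝ) ^ ((α - 2) / α) :=
    one_le_rpow (by norm_num) (div_nonneg (by linarith) (by linarith))
  obtain ⟨ht_le, hct_ge⟩ := (strictAnti_rpow_of_base_lt_one hξ0 hξ1).le_and_le_of_add_eq_two_mul
    (a := 0) (by rw [heq, rpow_zero, mul_one])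
    (sub_le_sub_right (le_mul_of_one_le_left (by positivity) hc) 1)
  constructor
  · have hc' : (2 : ℝ) ^ ((α - 2) / α) = (2 ^ ((α - 2) / 2)) ^ (2 / α) := by
      rw [← rpow_mul (by norm_num)]
      congr 1
      field_simp
    have hδ_ge := inv_le_of_one_le_rpow_mul_rpow (b := 2 ^ ((α - 2) / 2)) (by positivity) hδ.le hp
      (by rw [← hc']; linarith [hct_ge])
    rwa [← rpow_neg (by norm_num), ← neg_div, neg_sub] at hδ_ge
  · rwa [sub_nonpos, ← one_rpow (2 / α), rpow_le_rpow_iff hδ.le zero_le_one hp] at ht_le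
end

section
/- Let α > 2, χ > 0, c₂ ∈ (0,1], s > 0, and set ξ = exp(−χ c₂ s^{2/α}) ∈ (0,1). Define f(δ) = ξ^{δ^{2/α}−1} + ξ^{2^{(α−2)/α} δ^{2/α} − 1} for δ > 0. Then f is strictly decreasing, f(2^{(2−α)/2}) ≥ 2 and f(1) ≤ 2; hence there exists a unique δ* ∈ [2^{(2−α)/2}, 1] with f(δ*) = 2. -/
open Real

/-!
With `p = 2/α` and `c = 2^((α-2)/α) ≥ 1`, `f δ = ξ^(δ^p - 1) + ξ^(c δ^p - 1)`.
Since `0 < ξ < 1`, both summands decrease strictly in `δ`. At `δ = 1` the first summand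
is `1` and the second is at most `1`; at `δ₀ = 2^((2-α)/2)` one has `c δ₀^p = 1`, so the
second summand is `1` and the first is at least `1`. Continuity and the intermediate value
theorem give a root in `[δ₀, 1]`, unique by strict monotonicity.
-/

open Set

theorem StrictAntiOn.existsUnique_mem_Icc_eq {α β : Type*} [ConditionallyCompleteLinearOrder α]
    [TopologicalSpace α] [OrderTopology α] [DenselyOrdered α] [LinearOrder β]
    [TopologicalSpace β] [OrderClosedTopology β] {f : α → β} {a b : α} {y : β}
    (hf : StrictAntiOn f (Icc a b)) (hab : a ≤ b) (hcont : ContinuousOn f (Icc a b))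
    (hb : f b ≤ y) (ha : y ≤ f a) : ∃! x, x ∈ Icc a b ∧ f x = y := by
  obtain ⟨x, hx, hfx⟩ := intermediate_value_Icc' hab hcont ⟨hb, ha⟩
  exact ⟨x, ⟨hx, hfx⟩, fun x' ⟨hx', hfx'⟩ => hf.injOn hx' hx (hfx'.trans hfx.symm)⟩

namespace FairCoexistence

noncomputable def coexistenceSum (ξ c p δ : ℝ) : ℝ :=
  ξ ^ (δ ^ p - 1) + ξ ^ (c * δ ^ p - 1)

variable {ξ c p : ℝ}

theorem coexistenceSum_strictAntiOn (hξ : ξ ∈ Ioo 0 1) (hc : 0 < c) (hp : 0 < p) :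
    StrictAntiOn (coexistenceSum ξ c p) (Ioi 0) := by
  intro a ha b _ hab
  have hpow : a ^ p < b ^ p := rpow_lt_rpow (le_of_lt ha) hab hp
  have h₁ : ξ ^ (b ^ p - 1) < ξ ^ (a ^ p - 1) :=
    rpow_lt_rpow_of_exponent_gt hξ.1 hξ.2 (by linarith)
  have h₂ : ξ ^ (c * b ^ p - 1) < ξ ^ (c * a ^ p - 1) :=
    rpow_lt_rpow_of_exponent_gt hξ.1 hξ.2 (by nlinarith)
  exact add_lt_add h₁ h₂

theorem coexistenceSum_continuousOn (hξ : 0 < ξ) :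
    ContinuousOn (coexistenceSum ξ c p) (Ioi 0) := by
  have hexp : Continuous fun t : ℝ => ξ ^ t :=
    continuous_const.rpow continuous_id fun _ => Or.inl hξ.ne'
  have hpow : ContinuousOn (fun δ : ℝ => δ ^ p) (Ioi 0) :=
    continuousOn_id.rpow_const fun δ hδ => Or.inl (ne_of_gt hδ)
  exact (hexp.comp_continuousOn (hpow.sub continuousOn_const)).add
    (hexp.comp_continuousOn ((continuousOn_const.mul hpow).sub continuousOn_const))

theorem two_le_coexistenceSum (hξ : ξ ∈ Ioo 0 1) {δ : ℝ} (hδ : δ ^ p ≤ 1)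
    (hcδ : c * δ ^ p = 1) : 2 ≤ coexistenceSum ξ c p δ := by
  have h₁ : 1 ≤ ξ ^ (δ ^ p - 1) :=
    one_le_rpow_of_pos_of_le_one_of_nonpos hξ.1 hξ.2.le (by linarith)
  simp only [coexistenceSum, hcδ, sub_self, rpow_zero]
  linarith

theorem coexistenceSum_one_le_two (hξ : ξ ∈ Ioo 0 1) (hc : 1 ≤ c) :
    coexistenceSum ξ c p 1 ≤ 2 := by
  have h₂ : ξ ^ (c - 1) ≤ 1 := rpow_le_one hξ.1.le hξ.2.le (by linarith)
  simp only [coexistenceSum, one_rpow, mul_one, sub_self, rpow_zero]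
  linarith

theorem two_rpow_mul_rpow_eq_one {α : ℝ} (hα : α ≠ 0) :
    (2 : ℝ) ^ ((α - 2) / α) * ((2 : ℝ) ^ ((2 - α) / 2)) ^ (2 / α) = 1 := by
  rw [← rpow_mul zero_le_two, ← rpow_add two_pos]
  convert rpow_zero (2 : ℝ) using 2
  field_simp
  ring

end FairCoexistence

open FairCoexistence

theorem delta_star_exists_unique_general (α χ c₂ s : ℝ) (hα : 2 < α) (hχ : 0 < χ)
    (hc₂0 : 0 < c₂) (hs : 0 < s) :
    let ξ : ℝ := Real.exp (-χ * c₂ * s ^ (2 / α))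
    let f : ℝ → ℝ := fun δ =>
      ξ ^ (δ ^ (2 / α) - 1) + ξ ^ (2 ^ ((α - 2) / α) * δ ^ (2 / α) - 1)
    ξ ∈ Set.Ioo (0 : ℝ) 1 ∧
    StrictAntiOn f (Set.Ioi 0) ∧
    2 ≤ f (2 ^ ((2 - α) / 2)) ∧
    f 1 ≤ 2 ∧
    ∃! δ : ℝ, δ ∈ Set.Icc ((2 : ℝ) ^ ((2 - α) / 2)) 1 ∧ f δ = 2 := by
  intro ξ f
  have hα0 : 0 < α := by linarith
  have hξ : ξ ∈ Ioo 0 1 := by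
    have : 0 < χ * c₂ * s ^ (2 / α) := by positivity
    exact ⟨exp_pos _, exp_lt_one_iff.mpr (by linarith)⟩
  have hc : (1 : ℝ) ≤ 2 ^ ((α - 2) / α) := one_le_rpow one_le_two (by positivity)
  have hanti : StrictAntiOn f (Ioi 0) :=
    coexistenceSum_strictAntiOn hξ (by positivity) (by positivity)
  have hδ₀pos : (0 : ℝ) < 2 ^ ((2 - α) / 2) := by positivity
  have hδ₀le : (2 : ℝ) ^ ((2 - α) / 2) ≤ 1 :=
    rpow_le_one_of_one_le_of_nonpos one_le_two (by linarith)
  have hf₀ : 2 ≤ f (2 ^ ((2 - α) / 2)) :=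
    two_le_coexistenceSum hξ (rpow_le_one hδ₀pos.le hδ₀le (by positivity))
      (two_rpow_mul_rpow_eq_one hα0.ne')
  have hf₁ : f 1 ≤ 2 := coexistenceSum_one_le_two hξ hc
  have hIcc : Icc ((2 : ℝ) ^ ((2 - α) / 2)) 1 ⊆ Ioi 0 := fun x hx => hδ₀pos.trans_le hx.1
  exact ⟨hξ, hanti, hf₀, hf₁, (hanti.mono hIcc).existsUnique_mem_Icc_eq hδ₀le
    ((coexistenceSum_continuousOn hξ.1).mono hIcc) hf₁ hf₀⟩

/-- Existence and uniqueness of the fair-coexistence power budget `δ*`. -/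
theorem delta_star_exists_unique (α χ c₂ s : ℝ) (hα : 2 < α) (hχ : 0 < χ)
    (hc₂0 : 0 < c₂) (hc₂1 : c₂ ≤ 1) (hs : 0 < s) :
    let ξ : ℝ := Real.exp (-χ * c₂ * s ^ (2 / α))
    let f : ℝ → ℝ := fun δ =>
      ξ ^ (δ ^ (2 / α) - 1) + ξ ^ (2 ^ ((α - 2) / α) * δ ^ (2 / α) - 1)
    ξ ∈ Set.Ioo (0 : ℝ) 1 ∧
    StrictAntiOn f (Set.Ioi 0) ∧
    2 ≤ f (2 ^ ((2 - α) / 2)) ∧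
    f 1 ≤ 2 ∧
    ∃! δ : ℝ, δ ∈ Set.Icc ((2 : ℝ) ^ ((2 - α) / 2)) 1 ∧ f δ = 2 :=
  delta_star_exists_unique_general α χ c₂ s hα hχ hc₂0 hs
end
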